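/- Let g0 be a two-step nilpotent Lie algebra with bracket μ0 and let φ be a skew-symmetric bilinear map on g0. The deformed bracket μ_t = μ0 + tφ is the bracket of a two-step nilpotent Lie algebra for all t if and only if: (1) φ(φ(X,Y),Z) = 0 for all X,Y,Z, (2) δ_H φ = 0, and (3) δ_C φ = 0. -/

import Mathlib

/-!
Expanding with `⁅⁅X, Y⁆, Z⁆ = 0`, the two-step condition for `μ_t = μ0 + tφ` reads
`t • S(X,Y,Z) + t² • φ(φ(X,Y),Z) = 0`, where `S(X,Y,Z) = μ0(φ(X,Y),Z) + φ(μ0(X,Y),Z)` (`mixedTerm`).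
Evaluating at `t = ±1` shows that it holds for all `t` iff `S = 0` and `φ ∘ φ = 0`.
By skew-symmetry, `δ_H φ(X,Y,Z) = -(S(X,Y,Z) + S(Y,Z,X))` and `δ_C φ` is the cyclic sum of `S`;
so `S = 0` kills both, and conversely `δ_H φ = 0` makes `S` change sign under rotation of its
arguments, and three rotations give `S = -S`.
-/

theorem eq_zero_of_forall_smul_add_mul_smul_eq_zero {R M : Type*} [Ring R] [AddCommGroup M]
    [Module R M] [IsAddTorsionFree M] {a b : M} (h : ∀ t : R, t • a + (t * t) • b = 0) :
    a = 0 ∧ b = 0 := by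
  have ha : a = -b := eq_neg_of_add_eq_zero_left (by simpa using h 1)
  have hb : b = 0 := self_eq_neg.mp <| eq_neg_of_add_eq_zero_left <| by simpa [ha] using h (-1)
  exact ⟨by rw [ha, hb, neg_zero], hb⟩

theorem eq_zero_of_forall_eq_neg_rotate {α M : Type*} [AddGroup M] [IsAddTorsionFree M]
    {f : α → α → α → M} (h : ∀ x y z, f x y z = -f y z x) (x y z : α) : f x y z = 0 := by
  rw [← neg_eq_self]
  calc -f x y z = f y z x := by rw [h, neg_neg]
    _ = f x y z := by rw [h, h z x y, neg_neg]

namespace LieAlgebra.LinearDeformation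

variable {K L : Type*} [CommRing K] [LieRing L] [LieAlgebra K L]

def deformedBracket (φ : L →ₗ[K] L →ₗ[K] L) (t : K) (X Y : L) : L := ⁅X, Y⁆ + t • φ X Y

def mixedTerm (φ : L →ₗ[K] L →ₗ[K] L) (X Y Z : L) : L := ⁅φ X Y, Z⁆ + φ ⁅X, Y⁆ Z

def hochschildCoboundary (φ : L →ₗ[K] L →ₗ[K] L) (X Y Z : L) : L :=
  ⁅X, φ Y Z⁆ - φ ⁅X, Y⁆ Z + φ X ⁅Y, Z⁆ - ⁅φ X Y, Z⁆

def chevalleyCoboundary (φ : L →ₗ[K] L →ₗ[K] L) (X Y Z : L) : L :=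
  ⁅φ X Y, Z⁆ + ⁅φ Y Z, X⁆ + ⁅φ Z X, Y⁆ + φ ⁅X, Y⁆ Z + φ ⁅Y, Z⁆ X + φ ⁅Z, X⁆ Y

theorem deformedBracket_deformedBracket (h2 : ∀ X Y Z : L, ⁅⁅X, Y⁆, Z⁆ = 0)
    (φ : L →ₗ[K] L →ₗ[K] L) (t : K) (X Y Z : L) :
    deformedBracket φ t (deformedBracket φ t X Y) Z =
      t • mixedTerm φ X Y Z + (t * t) • φ (φ X Y) Z := by
  simp only [deformedBracket, mixedTerm, add_lie, smul_lie, map_add, map_smul,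
    LinearMap.add_apply, LinearMap.smul_apply, h2, smul_add, mul_smul]
  abel

theorem hochschildCoboundary_eq_neg_mixedTerm {φ : L →ₗ[K] L →ₗ[K] L}
    (hskew : ∀ X Y : L, φ X Y = -φ Y X) (X Y Z : L) :
    hochschildCoboundary φ X Y Z = -(mixedTerm φ X Y Z + mixedTerm φ Y Z X) := by
  rw [hochschildCoboundary, mixedTerm, mixedTerm, ← lie_skew X, hskew X]
  abel

theorem chevalleyCoboundary_eq_mixedTerm_add (φ : L →ₗ[K] L →ₗ[K] L) (X Y Z : L) :
    chevalleyCoboundary φ X Y Z =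
      mixedTerm φ X Y Z + mixedTerm φ Y Z X + mixedTerm φ Z X Y := by
  rw [chevalleyCoboundary, mixedTerm, mixedTerm, mixedTerm]
  abel

theorem mixedTerm_eq_zero_of_hochschildCoboundary_eq_zero [IsAddTorsionFree L]
    {φ : L →ₗ[K] L →ₗ[K] L} (hskew : ∀ X Y : L, φ X Y = -φ Y X)
    (hH : ∀ X Y Z : L, hochschildCoboundary φ X Y Z = 0) (X Y Z : L) :
    mixedTerm φ X Y Z = 0 :=
  eq_zero_of_forall_eq_neg_rotate (fun X Y Z => eq_neg_of_add_eq_zero_left <| neg_eq_zero.mp <|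
    (hochschildCoboundary_eq_neg_mixedTerm hskew X Y Z).symm.trans (hH X Y Z)) X Y Z

end LieAlgebra.LinearDeformation

open LieAlgebra.LinearDeformation in
/-- The linear deformation `μ_t = μ0 + tφ` of the bracket of a two-step
nilpotent Lie algebra is the bracket of a two-step nilpotent Lie algebra for
all `t` iff `φ ∘ φ = 0`, `δ_H φ = 0` and `δ_C φ = 0`. -/
theorem linear_deformation_two_step_nilpotent_iff
    {K L : Type*} [Field K] [CharZero K] [LieRing L] [LieAlgebra K L]
    (h2 : ∀ X Y Z : L, ⁅⁅X, Y⁆, Z⁆ = 0)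
    (φ : L →ₗ[K] L →ₗ[K] L)
    (hskew : ∀ X Y : L, φ X Y = - φ Y X) :
    (∀ t : K, ∀ X Y Z : L,
      ⁅⁅X, Y⁆ + t • φ X Y, Z⁆ + t • φ (⁅X, Y⁆ + t • φ X Y) Z = 0) ↔
    ((∀ X Y Z : L, φ (φ X Y) Z = 0) ∧
     (∀ X Y Z : L, ⁅X, φ Y Z⁆ - φ ⁅X, Y⁆ Z + φ X ⁅Y, Z⁆ - ⁅φ X Y, Z⁆ = 0) ∧
     (∀ X Y Z : L,
       ⁅φ X Y, Z⁆ + ⁅φ Y Z, X⁆ + ⁅φ Z X, Y⁆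
         + φ ⁅X, Y⁆ Z + φ ⁅Y, Z⁆ X + φ ⁅Z, X⁆ Y = 0)) := by
  have : IsAddTorsionFree L := .of_isTorsionFree K L
  have expand := deformedBracket_deformedBracket h2 φ
  constructor
  · intro h
    have coeffs (X Y Z : L) : mixedTerm φ X Y Z = 0 ∧ φ (φ X Y) Z = 0 :=
      eq_zero_of_forall_smul_add_mul_smul_eq_zero fun t => (expand t X Y Z).symm.trans (h t X Y Z)
    refine ⟨fun X Y Z => (coeffs X Y Z).2, fun X Y Z => ?_, fun X Y Z => ?_⟩
    · rw [← hochschildCoboundary, hochschildCoboundary_eq_neg_mixedTerm hskew,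
        (coeffs X Y Z).1, (coeffs Y Z X).1, add_zero, neg_zero]
    · rw [← chevalleyCoboundary, chevalleyCoboundary_eq_mixedTerm_add,
        (coeffs X Y Z).1, (coeffs Y Z X).1, (coeffs Z X Y).1, add_zero, add_zero]
  · rintro ⟨hφφ, hH, -⟩ t X Y Z
    have hS := mixedTerm_eq_zero_of_hochschildCoboundary_eq_zero hskew hH
    rw [← deformedBracket, ← deformedBracket, expand, hS, hφφ, smul_zero, smul_zero, add_zero]
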